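/- arXiv:1709.09078 — 5 statements merged into one kernel-verified Lean document; each statement's English description precedes it below -/
import Mathlib

section
/- Let H be complex-analytic near 0 ∈ ℂ² with H(0)=0, DH(0)=0, and det D²H(0) ≠ 0. Suppose Φ and Φ̃ are complex-analytic maps defined on neighborhoods of 0 in ℂ², fixing 0, each with Jacobian determinant identically equal to 1, and G, G̃ are complex-analytic functions near 0 ∈ ℂ with G(0)=G̃(0)=0, G′(0) ≠ 0 and G̃′(0) ≠ 0, such that H(Φ(u)) = G(u₁u₂) and H(Φ̃(u)) = G̃(u₁u₂) for all u = (u₁,u₂) in a neighborhood of 0. Then either G̃(h) = G(h) for all h in a neighborhood of 0, or G̃(h) = G(−h) for all h in a neighborhood of 0. -/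
open Filter

/-- Jacobian determinant of a map `ℂ² → ℂ²`. -/
noncomputable def jacDet (Φ : ℂ × ℂ → ℂ × ℂ) (u : ℂ × ℂ) : ℂ :=
  (fderiv ℂ Φ u (1, 0)).1 * (fderiv ℂ Φ u (0, 1)).2 -
    (fderiv ℂ Φ u (0, 1)).1 * (fderiv ℂ Φ u (1, 0)).2

/-- Second partial derivative (Hessian bilinear form entry) of `H : ℂ² → ℂ`. -/
noncomputable def hessEntry (H : ℂ × ℂ → ℂ) (y v w : ℂ × ℂ) : ℂ :=
  fderiv ℂ (fun z => fderiv ℂ H z v) y w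

/-- Determinant of the Hessian matrix of `H : ℂ² → ℂ` at `y`. -/
noncomputable def hessDet (H : ℂ × ℂ → ℂ) (y : ℂ × ℂ) : ℂ :=
  hessEntry H y (1, 0) (1, 0) * hessEntry H y (0, 1) (0, 1) -
    hessEntry H y (1, 0) (0, 1) * hessEntry H y (0, 1) (1, 0)

/-!
Put `Ψ = Φ'⁻¹ ∘ Φ` and `F = G'⁻¹ ∘ G`. Then `det DΨ ≡ 1` and `Ψ₁ Ψ₂ = F (u₁ u₂)`, and it suffices
to show `F = ± id` near `0`.

Comparing the quadratic parts of both sides at `0` gives `F'(0)² = 1`. Differentiating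
`Ψ₁ Ψ₂ = F (u₁ u₂)` and eliminating `Ψ₂` with `det DΨ = 1` gives `F'(t) (u₁ ∂₁ - u₂ ∂₂) Ψ₁ = Ψ₁`
on the fibre `u₁ u₂ = t`. The loop `θ ↦ (s e^{iθ}, s e^{-iθ})`, `s² = t`, lies in that fibre and
has velocity `i (u₁, -u₂)`, so along it `Ψ₁ = Ψ₁(s, s) e^{iθ / F'(t)}`, with `Ψ₁(s, s) ≠ 0` because
`F t ≠ 0`. As the loop is `2π`-periodic, `1 / F'(t)` is an integer; being continuous, it is
constant near `0`, hence `F t = F'(0) t = ± t`.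
-/

open Topology Complex

theorem jacDet_eq_det (Φ : ℂ × ℂ → ℂ × ℂ) (u : ℂ × ℂ) : jacDet Φ u = (fderiv ℂ Φ u).det := by
  rw [ContinuousLinearMap.det, ← LinearMap.det_toMatrix (Module.Basis.finTwoProd ℂ),
    Matrix.det_fin_two]
  simp [LinearMap.toMatrix_apply, jacDet]

theorem jacDet_comp {Φ Ψ : ℂ × ℂ → ℂ × ℂ} {u : ℂ × ℂ} (hΦ : DifferentiableAt ℂ Φ (Ψ u))
    (hΨ : DifferentiableAt ℂ Ψ u) : jacDet (Φ ∘ Ψ) u = jacDet Φ (Ψ u) * jacDet Ψ u := by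
  rw [jacDet_eq_det, jacDet_eq_det, jacDet_eq_det, fderiv_comp u hΦ hΨ, ContinuousLinearMap.det,
    ContinuousLinearMap.toLinearMap_comp, LinearMap.det_comp]

theorem Filter.EventuallyEq.jacDet_eq {Φ Ψ : ℂ × ℂ → ℂ × ℂ} {u : ℂ × ℂ} (h : Φ =ᶠ[𝓝 u] Ψ) :
    jacDet Φ u = jacDet Ψ u := by
  simp only [jacDet, h.fderiv_eq]

theorem eventually_jacDet_eq_one_of_comp_eq {Φ Φ' Ψ : ℂ × ℂ → ℂ × ℂ} {a : ℂ × ℂ}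
    (hΨ : ∀ᶠ u in 𝓝 a, DifferentiableAt ℂ Ψ u) (hΨa : ContinuousAt Ψ a)
    (hΦ' : ∀ᶠ v in 𝓝 (Ψ a), DifferentiableAt ℂ Φ' v ∧ jacDet Φ' v = 1)
    (hΦ : ∀ᶠ u in 𝓝 a, jacDet Φ u = 1) (hcomp : ∀ᶠ u in 𝓝 a, Φ' (Ψ u) = Φ u) :
    ∀ᶠ u in 𝓝 a, jacDet Ψ u = 1 := by
  filter_upwards [hΨ, hΨa.tendsto.eventually hΦ', hΦ, hcomp.eventually_nhds]
    with u hΨu ⟨hΦ'u, hjac'u⟩ hjacu hcompu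
  have := jacDet_comp hΦ'u hΨu
  rwa [Filter.EventuallyEq.jacDet_eq (Φ := Φ' ∘ Ψ) hcompu, hjacu, hjac'u, one_mul, eq_comm] at this

section
variable {𝕜 E F : Type*} [NontriviallyNormedField 𝕜] [NormedAddCommGroup E] [NormedSpace 𝕜 E]
  [CompleteSpace E] [NormedAddCommGroup F] [NormedSpace 𝕜 F]

theorem AnalyticAt.exists_localInverse {f : E → F} {i : E ≃L[𝕜] F} {a : E}
    (hf : AnalyticAt 𝕜 f a) (hfs : HasStrictFDerivAt f (i : E →L[𝕜] F) a) :
    ∃ g : F → E, AnalyticAt 𝕜 g (f a) ∧ (∀ᶠ x in 𝓝 a, g (f x) = x) ∧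
      ∀ᶠ y in 𝓝 (f a), f (g y) = y := by
  refine ⟨hfs.localInverse f i a, ?_, hfs.eventually_left_inverse, hfs.eventually_right_inverse⟩
  rw [HasStrictFDerivAt.localInverse_def]
  exact OpenPartialHomeomorph.analyticAt_symm' _ hfs.mem_toOpenPartialHomeomorph_source hf
    hfs.hasFDerivAt.fderiv
end

theorem exists_jacDet_eq_one_and_comp_eq {Φ Φ' : ℂ × ℂ → ℂ × ℂ} (hΦ : AnalyticAt ℂ Φ 0)
    (hΦ' : ∀ᶠ u in 𝓝 0, AnalyticAt ℂ Φ' u) (hΦ0 : Φ 0 = 0) (hΦ'0 : Φ' 0 = 0)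
    (hjac : ∀ᶠ u in 𝓝 0, jacDet Φ u = 1) (hjac' : ∀ᶠ u in 𝓝 0, jacDet Φ' u = 1) :
    ∃ Ψ : ℂ × ℂ → ℂ × ℂ, AnalyticAt ℂ Ψ 0 ∧ Ψ 0 = 0 ∧ (∀ᶠ u in 𝓝 0, jacDet Ψ u = 1) ∧
      ∀ᶠ u in 𝓝 0, Φ' (Ψ u) = Φ u := by
  have hdet : (fderiv ℂ Φ' 0).det ≠ 0 := by simp [← jacDet_eq_det, hjac'.self_of_nhds]
  obtain ⟨Φinv, hΦinv, hΦinvΦ', hΦ'Φinv⟩ := hΦ'.self_of_nhds.exists_localInverse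
    (i := (fderiv ℂ Φ' 0).toContinuousLinearEquivOfDetNeZero hdet)
    (by simpa using hΦ'.self_of_nhds.hasStrictFDerivAt)
  rw [hΦ'0, ← hΦ0] at hΦinv hΦ'Φinv
  have hΨ : AnalyticAt ℂ (Φinv ∘ Φ) 0 := hΦinv.comp hΦ
  have hΨ0 : Φinv (Φ 0) = 0 := by simpa [hΦ0, hΦ'0] using hΦinvΦ'.self_of_nhds
  have hΦ'Ψ : ∀ᶠ u in 𝓝 0, Φ' (Φinv (Φ u)) = Φ u := hΦ.continuousAt.tendsto.eventually hΦ'Φinv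
  refine ⟨Φinv ∘ Φ, hΨ, hΨ0, ?_, hΦ'Ψ⟩
  refine eventually_jacDet_eq_one_of_comp_eq
    (hΨ.eventually_analyticAt.mono fun u hu => hu.differentiableAt) hΨ.continuousAt ?_ hjac hΦ'Ψ
  rw [Function.comp_apply, hΨ0]
  exact (hΦ'.and hjac').mono fun v hv => ⟨hv.1.differentiableAt, hv.2⟩

theorem mul_eq_of_mul_eq_comp_sq {𝕜 : Type*} [NontriviallyNormedField 𝕜] {φ ψ F : 𝕜 → 𝕜}
    {a b c k : 𝕜} (hφ : HasDerivAt φ a 0)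
    (hψ : HasDerivAt ψ b 0) (hF : HasDerivAt F c 0) (hφ0 : φ 0 = 0) (hψ0 : ψ 0 = 0)
    (hF0 : F 0 = 0) (h : ∀ᶠ t in 𝓝 0, φ t * ψ t = F (k * t ^ 2)) : a * b = k * c := by
  have hl : ContinuousAt (fun t => dslope φ 0 t * dslope ψ 0 t) 0 :=
    (continuousAt_dslope_same.2 hφ.differentiableAt).mul
      (continuousAt_dslope_same.2 hψ.differentiableAt)
  have hr : ContinuousAt (fun t => k * dslope F 0 (k * t ^ 2)) 0 :=
    continuousAt_const.mul (ContinuousAt.comp_of_eq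
      (continuousAt_dslope_same.2 hF.differentiableAt) (by fun_prop) (by simp))
  have hpunct : (fun t => dslope φ 0 t * dslope ψ 0 t) =ᶠ[𝓝[≠] 0]
      fun t => k * dslope F 0 (k * t ^ 2) := by
    filter_upwards [nhdsWithin_le_nhds h, self_mem_nhdsWithin] with t ht ht0
    have hφt := sub_smul_dslope φ 0 t
    have hψt := sub_smul_dslope ψ 0 t
    have hFt := sub_smul_dslope F 0 (k * t ^ 2)
    simp only [sub_zero, smul_eq_mul, hφ0, hψ0, hF0] at hφt hψt hFt
    apply mul_left_cancel₀ (pow_ne_zero 2 ht0)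
    linear_combination hφt * (t * dslope ψ 0 t) + φ t * hψt + ht - hFt
  have key := ((hl.eventuallyEq_nhds_iff_eventuallyEq_nhdsNE hr).mp hpunct).self_of_nhds
  simpa [dslope_same, hφ.deriv, hψ.deriv, hF.deriv] using key

theorem fderiv_fst_mul_fderiv_snd {Ψ : ℂ × ℂ → ℂ × ℂ} {F : ℂ → ℂ} (hΨ : DifferentiableAt ℂ Ψ 0)
    (hF : DifferentiableAt ℂ F 0) (hΨ0 : Ψ 0 = 0) (hF0 : F 0 = 0)
    (h : ∀ᶠ u in 𝓝 0, (Ψ u).1 * (Ψ u).2 = F (u.1 * u.2)) (v : ℂ × ℂ) :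
    (fderiv ℂ Ψ 0 v).1 * (fderiv ℂ Ψ 0 v).2 = v.1 * v.2 * deriv F 0 := by
  have hline : HasDerivAt (fun t : ℂ => Ψ (t • v)) (fderiv ℂ Ψ 0 v) 0 :=
    (hΨ.hasFDerivAt.comp_hasDerivAt_of_eq 0
      ((hasDerivAt_id (0 : ℂ)).smul_const v) (by simp)).congr_deriv (by simp)
  have hlim : Tendsto (fun t : ℂ => t • v) (𝓝 0) (𝓝 0) :=
    (continuous_id.smul continuous_const).tendsto' 0 0 (zero_smul ℂ v)
  refine mul_eq_of_mul_eq_comp_sq (hasFDerivAt_fst.comp_hasDerivAt 0 hline)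
    (hasFDerivAt_snd.comp_hasDerivAt 0 hline) hF.hasDerivAt (by simp [hΨ0]) (by simp [hΨ0]) hF0 ?_
  filter_upwards [hlim.eventually h] with t ht
  simp only [Function.comp_apply, ht, Prod.smul_fst, Prod.smul_snd, smul_eq_mul]
  ring_nf

theorem deriv_sq_eq_one {Ψ : ℂ × ℂ → ℂ × ℂ} {F : ℂ → ℂ} (hΨ : DifferentiableAt ℂ Ψ 0)
    (hF : DifferentiableAt ℂ F 0) (hΨ0 : Ψ 0 = 0) (hF0 : F 0 = 0)
    (h : ∀ᶠ u in 𝓝 0, (Ψ u).1 * (Ψ u).2 = F (u.1 * u.2)) (hjac : jacDet Ψ 0 = 1) :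
    deriv F 0 ^ 2 = 1 := by
  have hq := fderiv_fst_mul_fderiv_snd hΨ hF hΨ0 hF0 h
  have h₁ := hq (1, 0)
  have h₂ := hq (0, 1)
  have h₁₂ := hq (1, 1)
  rw [show ((1 : ℂ), (1 : ℂ)) = (1, 0) + (0, 1) by simp, map_add] at h₁₂
  simp only [jacDet] at hjac
  simp only [Prod.fst_add, Prod.snd_add, mul_zero, zero_mul] at h₁ h₂ h₁₂
  set a := (fderiv ℂ Ψ 0 (1, 0)).1
  set c := (fderiv ℂ Ψ 0 (1, 0)).2
  set b := (fderiv ℂ Ψ 0 (0, 1)).1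
  set d := (fderiv ℂ Ψ 0 (0, 1)).2
  -- `F'(0) = ad + bc` and `1 = ad - bc`, while `(ad + bc)² - (ad - bc)² = 4 (ac) (bd) = 0`
  linear_combination -(deriv F 0 + (a + b) * (c + d)) * h₁₂
    + (a * c + b * d + 2 * (a * d + b * c)) * (h₁ + h₂) + 4 * b * d * h₁
    + (a * d - b * c + 1) * hjac

theorem ContinuousLinearMap.apply_prod_eq {R M : Type*} [Semiring R] [TopologicalSpace R]
    [AddCommMonoid M] [Module R M] [TopologicalSpace M] (L : R × R →L[R] M) (v : R × R) :
    L v = v.1 • L (1, 0) + v.2 • L (0, 1) := by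
  conv_lhs => rw [show v = v.1 • ((1 : R), (0 : R)) + v.2 • ((0 : R), (1 : R)) by simp]
  rw [map_add, map_smul, map_smul]

theorem deriv_mul_fderiv_eq_of_fst_mul_snd {Ψ : ℂ × ℂ → ℂ × ℂ} {F : ℂ → ℂ} {u : ℂ × ℂ}
    (hΨ : DifferentiableAt ℂ Ψ u) (hF : DifferentiableAt ℂ F (u.1 * u.2))
    (h : (fun x => (Ψ x).1 * (Ψ x).2) =ᶠ[𝓝 u] fun x => F (x.1 * x.2)) (hjac : jacDet Ψ u = 1) :
    deriv F (u.1 * u.2) * (fderiv ℂ Ψ u (u.1, -u.2)).1 = (Ψ u).1 := by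
  have hl := hΨ.hasFDerivAt.fst.mul hΨ.hasFDerivAt.snd
  have hm : HasFDerivAt (fun x : ℂ × ℂ => x.1 * x.2)
      (u.1 • ContinuousLinearMap.snd ℂ ℂ ℂ + u.2 • ContinuousLinearMap.fst ℂ ℂ ℂ) u :=
    hasFDerivAt_fst.mul hasFDerivAt_snd
  have hr := (hF.hasDerivAt.comp_hasFDerivAt u hm).congr_of_eventuallyEq h
  have heq := hl.unique hr
  have h₁ := congrArg (fun L : ℂ × ℂ →L[ℂ] ℂ => L (1, 0)) heq
  have h₂ := congrArg (fun L : ℂ × ℂ →L[ℂ] ℂ => L (0, 1)) heq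
  simp only [add_apply, smul_apply,
    ContinuousLinearMap.comp_apply, ContinuousLinearMap.coe_snd', ContinuousLinearMap.coe_fst',
    smul_eq_mul, smul_add, mul_zero, mul_one, zero_add, add_zero] at h₁ h₂
  rw [ContinuousLinearMap.apply_prod_eq]
  simp only [jacDet] at hjac
  simp only [neg_smul, Prod.fst_add, Prod.smul_fst, smul_eq_mul, Prod.fst_neg]
  linear_combination (fderiv ℂ Ψ u (0, 1)).1 * h₁ - (fderiv ℂ Ψ u (1, 0)).1 * h₂ + (Ψ u).1 * hjac

noncomputable def fiberLoop (s : ℂ) (θ : ℝ) : ℂ × ℂ := (s * exp (θ * I), s * exp (-(θ * I)))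

theorem fiberLoop_fst_mul_snd (s : ℂ) (θ : ℝ) :
    (fiberLoop s θ).1 * (fiberLoop s θ).2 = s ^ 2 := by
  simp only [fiberLoop]
  rw [mul_mul_mul_comm, ← exp_add, add_neg_cancel, exp_zero, mul_one, sq]

theorem norm_fiberLoop (s : ℂ) (θ : ℝ) : ‖fiberLoop s θ‖ = ‖s‖ := by
  simp [fiberLoop, Prod.norm_def, norm_exp_ofReal_mul_I, ← ofReal_neg, ← neg_mul]

theorem fiberLoop_two_pi (s : ℂ) : fiberLoop s (2 * Real.pi) = fiberLoop s 0 := by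
  simp [fiberLoop, exp_neg]

theorem hasDerivAt_fiberLoop (s : ℂ) (θ : ℝ) :
    HasDerivAt (fiberLoop s) (I • ((fiberLoop s θ).1, -(fiberLoop s θ).2)) θ := by
  have hθ : HasDerivAt (fun θ : ℝ => (θ : ℂ) * I) I θ := by
    simpa using (hasDerivAt_id θ).ofReal_comp.mul_const I
  refine ((hθ.cexp.const_mul s).prodMk (hθ.neg.cexp.const_mul s)).congr_deriv ?_
  ext <;> simp [fiberLoop] <;> ring

theorem exp_mul_eq_one_of_hasDerivAt {y : ℝ → ℂ} {a : ℂ} {T : ℝ}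
    (hy : ∀ θ, HasDerivAt y (a * y θ) θ) (hT : y T = y 0) (h0 : y 0 ≠ 0) : exp (a * T) = 1 := by
  have hz : ∀ θ : ℝ, HasDerivAt (fun θ : ℝ => exp (-(a * θ)) * y θ) 0 θ := fun θ => by
    have he : HasDerivAt (fun θ : ℝ => -(a * θ)) (-a) θ :=
      ((hasDerivAt_id θ).ofReal_comp.const_mul a).neg.congr_deriv (by simp)
    exact (he.cexp.mul (hy θ)).congr_deriv (by ring)
  have hconst := is_const_of_deriv_eq_zero (fun θ => (hz θ).differentiableAt)
    (fun θ => (hz θ).deriv) T 0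
  simp only [hT, ofReal_zero, mul_zero, neg_zero, exp_zero, one_mul] at hconst
  rw [← inv_eq_one, ← exp_neg]
  exact mul_eq_right₀ h0 |>.mp hconst

theorem exists_intCast_eq_of_fderiv_fiberLoop {p : ℂ × ℂ → ℂ} {s c : ℂ}
    (hp : ∀ θ, DifferentiableAt ℂ p (fiberLoop s θ))
    (hc : ∀ θ, fderiv ℂ p (fiberLoop s θ) ((fiberLoop s θ).1, -(fiberLoop s θ).2) =
      c * p (fiberLoop s θ))
    (h0 : p (fiberLoop s 0) ≠ 0) : ∃ n : ℤ, c = n := by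
  have hy : ∀ θ, HasDerivAt (p ∘ fiberLoop s) (I * c * (p ∘ fiberLoop s) θ) θ := fun θ => by
    refine (((hp θ).hasFDerivAt.restrictScalars ℝ).comp_hasDerivAt θ
      (hasDerivAt_fiberLoop s θ)).congr_deriv ?_
    rw [ContinuousLinearMap.coe_restrictScalars', map_smul, hc, smul_eq_mul, Function.comp_apply,
      mul_assoc]
  have hexp := exp_mul_eq_one_of_hasDerivAt (T := 2 * Real.pi) hy (by simp [fiberLoop_two_pi]) h0
  obtain ⟨n, hn⟩ := exp_eq_one_iff.mp hexp
  refine ⟨n, ?_⟩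
  have hπ : (2 * Real.pi * I : ℂ) ≠ 0 := by simp [Real.pi_ne_zero, I_ne_zero]
  apply mul_right_cancel₀ hπ
  push_cast at hn
  linear_combination hn

theorem eventually_eq_intCast_of_tendsto {α : Type*} {l : Filter α} {f : α → ℂ} {n : ℤ}
    (hf : Tendsto f l (𝓝 n)) (hint : ∀ᶠ x in l, ∃ m : ℤ, f x = m) : ∀ᶠ x in l, f x = n := by
  filter_upwards [hint, Metric.tendsto_nhds.mp hf 1 one_pos] with x ⟨m, hm⟩ hx
  rw [hm, dist_eq_norm, ← Int.cast_sub, norm_intCast, ← Int.cast_abs] at hx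
  have : m - n = 0 := Int.abs_lt_one_iff.mp (by exact_mod_cast hx)
  rw [hm, sub_eq_zero.mp this]

theorem eventually_eq_mul_of_eventually_deriv_eq {𝕜 : Type*} [RCLike 𝕜] {F : 𝕜 → 𝕜} {c : 𝕜}
    (hF : ∀ᶠ t in 𝓝 0, DifferentiableAt 𝕜 F t) (hF0 : F 0 = 0)
    (h : ∀ᶠ t in 𝓝 0, deriv F t = c) : ∀ᶠ t in 𝓝 0, F t = c * t := by
  obtain ⟨ε, hε, hball⟩ := Metric.eventually_nhds_iff_ball.mp (hF.and h)
  have hlin : ∀ t, HasDerivAt (fun t => c * t) c t := fun t => by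
    simpa using (hasDerivAt_id t).const_mul c
  have heq := Metric.isOpen_ball.eqOn_of_deriv_eq (convex_ball 0 ε).isPreconnected
    (fun t ht => (hball t ht).1.differentiableWithinAt)
    (fun t _ => (hlin t).differentiableAt.differentiableWithinAt)
    (fun t ht => by simp only [(hball t ht).2, (hlin t).deriv])
    (Metric.mem_ball_self hε) (by simp [hF0])
  filter_upwards [Metric.ball_mem_nhds 0 hε] with t ht using heq ht

theorem eventually_inv_deriv_eq_intCast {Ψ : ℂ × ℂ → ℂ × ℂ} {F : ℂ → ℂ} (hΨ : AnalyticAt ℂ Ψ 0)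
    (hjac : ∀ᶠ u in 𝓝 0, jacDet Ψ u = 1) (hF : AnalyticAt ℂ F 0)
    (hFne : ∀ᶠ t in 𝓝[≠] 0, F t ≠ 0) (h : ∀ᶠ u in 𝓝 0, (Ψ u).1 * (Ψ u).2 = F (u.1 * u.2)) :
    ∀ᶠ t in 𝓝[≠] 0, ∃ n : ℤ, (deriv F t)⁻¹ = n := by
  set p : ℂ × ℂ → ℂ := fun u => (Ψ u).1
  have hprod : Tendsto (fun u : ℂ × ℂ => u.1 * u.2) (𝓝 0) (𝓝 0) :=
    (continuous_fst.mul continuous_snd).tendsto' 0 0 (by simp)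
  have heuler : ∀ᶠ u in 𝓝 0, DifferentiableAt ℂ p u ∧ p u * (Ψ u).2 = F (u.1 * u.2) ∧
      deriv F (u.1 * u.2) * fderiv ℂ p u (u.1, -u.2) = p u := by
    filter_upwards [hΨ.eventually_analyticAt, h.eventually_nhds, hjac,
      hprod.eventually hF.eventually_analyticAt] with u hΨu hu hjacu hFu
    have hp : HasFDerivAt p ((ContinuousLinearMap.fst ℂ ℂ ℂ).comp (fderiv ℂ Ψ u)) u :=
      hΨu.differentiableAt.hasFDerivAt.fst
    refine ⟨hp.differentiableAt, hu.self_of_nhds, ?_⟩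
    rw [hp.fderiv]
    exact deriv_mul_fderiv_eq_of_fst_mul_snd hΨu.differentiableAt hFu.differentiableAt hu hjacu
  obtain ⟨ε, hε, hball⟩ := Metric.eventually_nhds_iff_ball.mp heuler
  have hsmall : ∀ᶠ t in 𝓝 (0 : ℂ), ‖t‖ < ε ^ 2 := by
    filter_upwards [Metric.ball_mem_nhds (0 : ℂ) (pow_pos hε 2)] with t ht
    exact mem_ball_zero_iff.mp ht
  filter_upwards [nhdsWithin_le_nhds hsmall, hFne] with t ht hFt
  obtain ⟨s, rfl⟩ := IsAlgClosed.exists_pow_nat_eq t two_pos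
  have hloop : ∀ θ, fiberLoop s θ ∈ Metric.ball 0 ε := fun θ => by
    rw [mem_ball_zero_iff, norm_fiberLoop]
    rw [norm_pow] at ht
    exact (pow_lt_pow_iff_left₀ (norm_nonneg s) hε.le two_ne_zero).mp ht
  have hp0 : ∀ θ, p (fiberLoop s θ) ≠ 0 := fun θ hθ => by
    have := (hball _ (hloop θ)).2.1
    rw [hθ, zero_mul, fiberLoop_fst_mul_snd] at this
    exact hFt this.symm
  refine exists_intCast_eq_of_fderiv_fiberLoop (fun θ => (hball _ (hloop θ)).1) (fun θ => ?_)
    (hp0 0)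
  have he := (hball _ (hloop θ)).2.2
  rw [fiberLoop_fst_mul_snd] at he
  have hd : deriv F (s ^ 2) ≠ 0 := fun hd => hp0 θ (by rw [← he, hd, zero_mul])
  rw [← he, inv_mul_cancel_left₀ hd]

theorem eventually_eq_self_or_neg_of_fst_mul_snd {Ψ : ℂ × ℂ → ℂ × ℂ} {F : ℂ → ℂ}
    (hΨ : AnalyticAt ℂ Ψ 0) (hΨ0 : Ψ 0 = 0) (hjac : ∀ᶠ u in 𝓝 0, jacDet Ψ u = 1)
    (hF : AnalyticAt ℂ F 0) (hF0 : F 0 = 0)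
    (h : ∀ᶠ u in 𝓝 0, (Ψ u).1 * (Ψ u).2 = F (u.1 * u.2)) :
    (∀ᶠ t in 𝓝 0, F t = t) ∨ ∀ᶠ t in 𝓝 0, F t = -t := by
  have hsq := deriv_sq_eq_one hΨ.differentiableAt hF.differentiableAt hΨ0 hF0 h hjac.self_of_nhds
  have hd0 : deriv F 0 ≠ 0 := by rintro hd; simp [hd] at hsq
  have hFne : ∀ᶠ t in 𝓝[≠] 0, F t ≠ 0 := by
    simpa [hF0] using hF.differentiableAt.hasDerivAt.eventually_ne hd0
  have hpm := sq_eq_one_iff.mp hsq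
  obtain ⟨n, hn⟩ : ∃ n : ℤ, (deriv F 0)⁻¹ = n := by
    rcases hpm with h1 | h1
    · exact ⟨1, by simp [h1]⟩
    · exact ⟨-1, by simp [h1]⟩
  have hlim : Tendsto (fun t => (deriv F t)⁻¹) (𝓝[≠] 0) (𝓝 n) :=
    hn ▸ (hF.deriv.continuousAt.inv₀ hd0).tendsto.mono_left nhdsWithin_le_nhds
  have hconst : ∀ᶠ t in 𝓝 0, deriv F t = deriv F 0 := by
    refine eventuallyEq_nhds_of_eventuallyEq_nhdsNE ?_ rfl
    filter_upwards [eventually_eq_intCast_of_tendsto hlim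
      (eventually_inv_deriv_eq_intCast hΨ hjac hF hFne h)] with t ht
    rw [← inv_inj, ht, hn]
  have hlin := eventually_eq_mul_of_eventually_deriv_eq
    (hF.eventually_analyticAt.mono fun t ht => ht.differentiableAt) hF0 hconst
  rcases hpm with h1 | h1
  · exact .inl (by simpa [h1] using hlin)
  · exact .inr (by simpa [h1] using hlin)

theorem birkhoff_siegel_uniqueness_general
    (H : ℂ × ℂ → ℂ)
    (Φ Φ' : ℂ × ℂ → ℂ × ℂ) (V V' : Set (ℂ × ℂ))
    (hV : IsOpen V) (hV0 : (0 : ℂ × ℂ) ∈ V)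
    (hV' : IsOpen V') (hV'0 : (0 : ℂ × ℂ) ∈ V')
    (hΦ : AnalyticOnNhd ℂ Φ V) (hΦ0 : Φ 0 = 0)
    (hΦ' : AnalyticOnNhd ℂ Φ' V') (hΦ'0 : Φ' 0 = 0)
    (hjac : ∀ u ∈ V, jacDet Φ u = 1)
    (hjac' : ∀ u ∈ V', jacDet Φ' u = 1)
    (G G' : ℂ → ℂ) (W W' : Set ℂ)
    (hW0 : (0 : ℂ) ∈ W)
    (hW'0 : (0 : ℂ) ∈ W')
    (hG : AnalyticOnNhd ℂ G W) (hG0 : G 0 = 0)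
    (hG' : AnalyticOnNhd ℂ G' W') (hG'0 : G' 0 = 0) (hG''deriv : deriv G' 0 ≠ 0)
    (hEq : ∀ u ∈ V, H (Φ u) = G (u.1 * u.2))
    (hEq' : ∀ u ∈ V', H (Φ' u) = G' (u.1 * u.2)) :
    (∀ᶠ h in nhds (0 : ℂ), G' h = G h) ∨ (∀ᶠ h in nhds (0 : ℂ), G' h = G (-h)) := by
  obtain ⟨Ψ, hΨ, hΨ0, hjacΨ, hΦ'Ψ⟩ := exists_jacDet_eq_one_and_comp_eq (hΦ 0 hV0)
    (eventually_of_mem (hV'.mem_nhds hV'0) hΦ') hΦ0 hΦ'0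
    (eventually_of_mem (hV.mem_nhds hV0) hjac) (eventually_of_mem (hV'.mem_nhds hV'0) hjac')
  obtain ⟨Ginv, hGinv, hGinvG', hG'Ginv⟩ := (hG' 0 hW'0).exists_localInverse
    (i := .unitsEquivAut ℂ (.mk0 _ hG''deriv)) (hG' 0 hW'0).hasStrictDerivAt
  rw [hG'0] at hGinv hG'Ginv
  have hG'F : ∀ᶠ t in 𝓝 0, G' (Ginv (G t)) = G t :=
    (hG 0 hW0).continuousAt.tendsto.eventually (hG0 ▸ hG'Ginv)
  have hΨF : ∀ᶠ u in 𝓝 0, (Ψ u).1 * (Ψ u).2 = Ginv (G (u.1 * u.2)) := by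
    have hpq : ContinuousAt (fun u => (Ψ u).1 * (Ψ u).2) 0 :=
      hΨ.continuousAt.fst.mul hΨ.continuousAt.snd
    filter_upwards [hΦ'Ψ, hV.mem_nhds hV0,
      hΨ.continuousAt.tendsto.eventually (hΨ0.symm ▸ hV'.mem_nhds hV'0),
      hpq.tendsto.eventually (by simpa [hΨ0] using hGinvG')] with u hu huV huV' hGu
    rw [← hEq u huV, ← hu, hEq' _ huV', hGu]
  rcases eventually_eq_self_or_neg_of_fst_mul_snd (F := Ginv ∘ G) hΨ hΨ0 hjacΨ
    (hGinv.comp_of_eq (hG 0 hW0) hG0) (by simpa [hG0, hG'0] using hGinvG'.self_of_nhds) hΨF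
    with hF | hF
  · left
    filter_upwards [hG'F, hF] with t hG't hFt
    exact (congrArg G' hFt).symm.trans hG't
  · right
    have hneg : Tendsto (fun t : ℂ => -t) (𝓝 0) (𝓝 0) := continuous_neg.tendsto' 0 0 neg_zero
    filter_upwards [hneg.eventually hG'F, hneg.eventually hF] with t hG't hFt
    rw [neg_neg] at hFt
    exact (congrArg G' hFt).symm.trans hG't

/-- **Birkhoff–Siegel normal form, uniqueness.**
If a Morse germ `H` at `0 ∈ ℂ²` is brought to the forms `G (u₁u₂)` and `G̃ (u₁u₂)`
by two analytic unimodular (Jacobian determinant ≡ 1) changes of coordinates fixing `0`,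
then `G̃ = G` near `0`, or `G̃ (h) = G (−h)` near `0`. -/
theorem birkhoff_siegel_uniqueness
    (H : ℂ × ℂ → ℂ) (U : Set (ℂ × ℂ)) (hU : IsOpen U) (hU0 : (0 : ℂ × ℂ) ∈ U)
    (hH : AnalyticOnNhd ℂ H U)
    (hH0 : H 0 = 0)
    (hDH0 : fderiv ℂ H 0 = 0)
    (hHess : hessDet H 0 ≠ 0)
    (Φ Φ' : ℂ × ℂ → ℂ × ℂ) (V V' : Set (ℂ × ℂ))
    (hV : IsOpen V) (hV0 : (0 : ℂ × ℂ) ∈ V)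
    (hV' : IsOpen V') (hV'0 : (0 : ℂ × ℂ) ∈ V')
    (hΦ : AnalyticOnNhd ℂ Φ V) (hΦ0 : Φ 0 = 0)
    (hΦ' : AnalyticOnNhd ℂ Φ' V') (hΦ'0 : Φ' 0 = 0)
    (hjac : ∀ u ∈ V, jacDet Φ u = 1)
    (hjac' : ∀ u ∈ V', jacDet Φ' u = 1)
    (G G' : ℂ → ℂ) (W W' : Set ℂ)
    (hW : IsOpen W) (hW0 : (0 : ℂ) ∈ W)
    (hW' : IsOpen W') (hW'0 : (0 : ℂ) ∈ W')
    (hG : AnalyticOnNhd ℂ G W) (hG0 : G 0 = 0) (hG'deriv : deriv G 0 ≠ 0)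
    (hG' : AnalyticOnNhd ℂ G' W') (hG'0 : G' 0 = 0) (hG''deriv : deriv G' 0 ≠ 0)
    (hEq : ∀ u ∈ V, H (Φ u) = G (u.1 * u.2))
    (hEq' : ∀ u ∈ V', H (Φ' u) = G' (u.1 * u.2)) :
    (∀ᶠ h in nhds (0 : ℂ), G' h = G h) ∨ (∀ᶠ h in nhds (0 : ℂ), G' h = G (-h)) :=
  birkhoff_siegel_uniqueness_general H Φ Φ' V V' hV hV0 hV' hV'0 hΦ hΦ0 hΦ' hΦ'0 hjac hjac' G G' W
    W' hW0 hW'0 hG hG0 hG' hG'0 hG''deriv hEq hEq'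
end

section
/- Let Ω ⊆ ℂ²×ℂ be open and let Φ : Ω → ℂ², (u,x) = (u₁,u₂,x) ↦ Φ(u,x), be complex-analytic with det DᵤΦ(u,x) = 1 for all (u,x) ∈ Ω, where DᵤΦ is the 2×2 Jacobian matrix of partial derivatives with respect to u₁,u₂. Define f = (f₁,f₂) : Ω → ℂ² by f(u,x) = (DᵤΦ(u,x))⁻¹ · ∂ₓΦ(u,x). Then ∂f₁/∂u₁ + ∂f₂/∂u₂ = 0 at every point of Ω. -/
open Matrix

/-- The `2×2` Jacobian matrix of `Φ : ℂ² × ℂ → ℂ²` with respect to the `u = (u₁,u₂)`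
variables, at a point `p = (u, x)`. -/
noncomputable def DuMat (Φ : (ℂ × ℂ) × ℂ → ℂ × ℂ) (p : (ℂ × ℂ) × ℂ) :
    Matrix (Fin 2) (Fin 2) ℂ :=
  !![(fderiv ℂ Φ p ((1, 0), 0)).1, (fderiv ℂ Φ p ((0, 1), 0)).1;
     (fderiv ℂ Φ p ((1, 0), 0)).2, (fderiv ℂ Φ p ((0, 1), 0)).2]

/-- The partial derivative `∂ₓΦ` of `Φ : ℂ² × ℂ → ℂ²`, as a column vector. -/
noncomputable def DxVec (Φ : (ℂ × ℂ) × ℂ → ℂ × ℂ) (p : (ℂ × ℂ) × ℂ) : Fin 2 → ℂ :=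
  ![(fderiv ℂ Φ p ((0, 0), 1)).1, (fderiv ℂ Φ p ((0, 0), 1)).2]

/-- **A transversely symplectic transformation yields a divergence-free (hence locally
Hamiltonian) nonautonomous vector field.**  If `Φ : Ω → ℂ²` is analytic on the open set
`Ω ⊆ ℂ² × ℂ` with `det DᵤΦ ≡ 1`, and `f = (DᵤΦ)⁻¹ · ∂ₓΦ`, then
`∂f₁/∂u₁ + ∂f₂/∂u₂ = 0` on `Ω`. -/
theorem transversely_symplectic_divergence_free
    (Ω : Set ((ℂ × ℂ) × ℂ)) (hΩ : IsOpen Ω)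
    (Φ : (ℂ × ℂ) × ℂ → ℂ × ℂ)
    (hΦ : AnalyticOnNhd ℂ Φ Ω)
    (hdet : ∀ p ∈ Ω, (DuMat Φ p).det = 1)
    (f : (ℂ × ℂ) × ℂ → Fin 2 → ℂ)
    (hf : ∀ p, f p = (DuMat Φ p)⁻¹ *ᵥ DxVec Φ p) :
    ∀ p ∈ Ω,
      fderiv ℂ (fun q => f q 0) p ((1, 0), 0) +
        fderiv ℂ (fun q => f q 1) p ((0, 1), 0) = 0 := by
  intro p hp
  set e1 : (ℂ × ℂ) × ℂ := ((1, 0), 0) with he1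
  set e2 : (ℂ × ℂ) × ℂ := ((0, 1), 0) with he2
  set e3 : (ℂ × ℂ) × ℂ := ((0, 0), 1) with he3
  set F : ((ℂ × ℂ) × ℂ) → ((ℂ × ℂ) × ℂ) →L[ℂ] ℂ × ℂ := fun q => fderiv ℂ Φ q with hFdef
  have hFanal : AnalyticOnNhd ℂ F Ω := hΦ.fderiv
  have hFd : HasFDerivAt F (fderiv ℂ F p) p := (hFanal p hp).differentiableAt.hasFDerivAt
  set S := fderiv ℂ F p with hSdef
  have hsymm : ∀ v w, S v w = S w v := by
    intro v w
    exact second_derivative_symmetric_of_eventually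
      (Filter.eventually_of_mem (hΩ.mem_nhds hp) fun y hy =>
        (hΦ y hy).differentiableAt.hasFDerivAt) hFd v w
  -- derivative of q ↦ F q v
  have hFv : ∀ v : (ℂ × ℂ) × ℂ, HasFDerivAt (fun q => F q v)
      ((ContinuousLinearMap.apply ℂ (ℂ × ℂ) v).comp S) p := fun v =>
    ((ContinuousLinearMap.apply ℂ (ℂ × ℂ) v).hasFDerivAt (x := F p)).comp p hFd
  -- the explicit local formulas for f 0 and f 1
  have hloc : ∀ q ∈ Ω, f q 0 = (F q e2).2 * (F q e3).1 - (F q e2).1 * (F q e3).2 ∧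
      f q 1 = (F q e1).1 * (F q e3).2 - (F q e1).2 * (F q e3).1 := by
    intro q hq
    have hinv : (DuMat Φ q)⁻¹ =
        !![(F q e2).2, -(F q e2).1; -(F q e1).2, (F q e1).1] := by
      rw [Matrix.inv_def, hdet q hq, Ring.inverse_one, one_smul, DuMat,
        Matrix.adjugate_fin_two]
      simp [hFdef, he1, he2]
    constructor <;>
      simp [hf, hinv, DxVec, Matrix.mulVec, dotProduct, Fin.sum_univ_two, he1, he2, he3,
        hFdef] <;> ring
  -- derivatives of products
  have hg0 := (((hFv e2).snd.mul (hFv e3).fst).sub ((hFv e2).fst.mul (hFv e3).snd))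
  have hg1 := (((hFv e1).fst.mul (hFv e3).snd).sub ((hFv e1).snd.mul (hFv e3).fst))
  have heq0 : (fun q => f q 0) =ᶠ[nhds p]
      fun q => (F q e2).2 * (F q e3).1 - (F q e2).1 * (F q e3).2 :=
    Filter.eventually_of_mem (hΩ.mem_nhds hp) fun q hq => (hloc q hq).1
  have heq1 : (fun q => f q 1) =ᶠ[nhds p]
      fun q => (F q e1).1 * (F q e3).2 - (F q e1).2 * (F q e3).1 :=
    Filter.eventually_of_mem (hΩ.mem_nhds hp) fun q hq => (hloc q hq).2
  have h0 : fderiv ℂ (fun q => f q 0) p = _ := heq0.fderiv_eq.trans hg0.fderiv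
  have h1 : fderiv ℂ (fun q => f q 1) p = _ := heq1.fderiv_eq.trans hg1.fderiv
  -- the determinant condition, differentiated in the x-direction
  have hDdet := (((hFv e1).fst.mul (hFv e2).snd).sub ((hFv e2).fst.mul (hFv e1).snd))
  have heqD : (fun q => (F q e1).1 * (F q e2).2 - (F q e2).1 * (F q e1).2) =ᶠ[nhds p]
      fun _ => (1 : ℂ) := by
    refine Filter.eventually_of_mem (hΩ.mem_nhds hp) fun q hq => ?_
    have := hdet q hq
    rw [DuMat, Matrix.det_fin_two_of] at this
    simpa [hFdef, he1, he2] using this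
  have hDzero : fderiv ℂ (fun q => (F q e1).1 * (F q e2).2 - (F q e2).1 * (F q e1).2) p = 0 := by
    rw [heqD.fderiv_eq]; exact fderiv_const_apply 1
  have hD3 := congrArg (fun L => L e3) (hDdet.fderiv.symm.trans hDzero)
  simp only [h0, h1]
  simp only [ContinuousLinearMap.add_apply, ContinuousLinearMap.sub_apply,
    ContinuousLinearMap.smul_apply, ContinuousLinearMap.comp_apply,
    ContinuousLinearMap.coe_fst', ContinuousLinearMap.coe_snd',
    ContinuousLinearMap.apply_apply, ContinuousLinearMap.zero_apply,
    smul_eq_mul] at hD3 ⊢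
  have s12 := hsymm e1 e2
  have s13 := hsymm e1 e3
  have s23 := hsymm e2 e3
  have s12a : (S e1 e2).1 = (S e2 e1).1 := by rw [s12]
  have s12b : (S e1 e2).2 = (S e2 e1).2 := by rw [s12]
  have s13a : (S e1 e3).1 = (S e3 e1).1 := by rw [s13]
  have s13b : (S e1 e3).2 = (S e3 e1).2 := by rw [s13]
  have s23a : (S e2 e3).1 = (S e3 e2).1 := by rw [s23]
  have s23b : (S e2 e3).2 = (S e3 e2).2 := by rw [s23]
  linear_combination hD3 + ((F p e3).1) * s12b - ((F p e3).2) * s12a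
    + ((F p e2).2) * s13a - ((F p e2).1) * s13b - ((F p e1).2) * s23a + ((F p e1).1) * s23b
end

section
/- Let D ⊆ ℂ be a disc around 0 and E ⊆ ℂ a disc around 0. Let χ⁰, χ¹ : D × E → ℂ be functions such that, for each h ∈ D, ε ↦ χ⁰(h,ε) is differentiable at ε = 0 with derivative ∂_εχ⁰(h,0), ε ↦ χ¹(h,ε) is continuous at ε = 0, and χ⁰(h,0) = λ₀ for all h ∈ D, where λ₀ ∈ ℂ, λ₀ ≠ 0. Fix ε₀ ∈ E∖{0}, set κ = exp(2πi·λ₀/ε₀), and for n ∈ ℕ define ε_n = λ₀ / (λ₀/ε₀ + n) (well-defined and nonzero for all large n, with ε_n → 0). Then for each h ∈ D: (i) exp(±2πi·λ₀/ε_n) = κ^{±1} for every n; (ii) lim_{n→∞} exp(−2πi·χ⁰(h,ε_n)/ε_n) = κ⁻¹·exp(−2πi·∂_εχ⁰(h,0)); and (iii) lim_{n→∞} exp(2πi·[χ⁰(h,ε_n)/ε_n + χ¹(h,ε_n)]) = κ·exp(2πi·[∂_εχ⁰(h,0) + χ¹(h,0)]). -/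
/-!
Since `ε_n = λ₀ / (λ₀/ε₀ + n)`, the exponent `2πiλ₀/ε_n` is `2πiλ₀/ε₀ + 2πin`, so
`e^{2πiλ₀/ε_n} = κ` for every `n`. Splitting `χ⁰(h,ε)/ε = λ₀/ε + (χ⁰(h,ε) - χ⁰(h,0))/ε`
factors each multiplier as `κ^{±1}` times the exponential of a difference quotient of
`χ⁰(h,·)` at `0`, which converges to `∂_εχ⁰(h,0)` because `ε_n → 0` through nonzero values.
-/

open Metric Complex Filter Topology Bornology

theorem tendsto_div_const_add_natCast_nhdsNE_zero {𝕜 : Type*} [NormedField 𝕜]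
    [NormSMulClass ℤ 𝕜] {a : 𝕜} (ha : a ≠ 0) (c : 𝕜) :
    Tendsto (fun n : ℕ => a / (c + n)) atTop (𝓝[≠] 0) := by
  have hcob : Tendsto (fun n : ℕ => a⁻¹ * (c + n)) atTop (cobounded 𝕜) :=
    (tendsto_mul_left_cobounded (inv_ne_zero ha)).comp
      ((tendsto_const_add_cobounded c).comp tendsto_natCast_atTop_cobounded)
  refine (tendsto_inv₀_cobounded'.comp hcob).congr fun n => ?_
  rw [Function.comp_apply, mul_inv_rev, inv_inv, div_eq_mul_inv, mul_comm]

theorem HasDerivAt.tendsto_div_sub_div_nhdsNE_zero {𝕜 : Type*} [NontriviallyNormedField 𝕜]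
    {f : 𝕜 → 𝕜} {f' : 𝕜} (hf : HasDerivAt f f' 0) :
    Tendsto (fun t => f t / t - f 0 / t) (𝓝[≠] 0) (𝓝 f') := by
  refine hf.tendsto_slope_zero.congr fun t => ?_
  rw [zero_add, smul_eq_mul, ← sub_div, div_eq_inv_mul]

theorem exp_two_pi_mul_I_mul_add_natCast (z : ℂ) (n : ℕ) :
    exp (2 * Real.pi * I * (z + n)) = exp (2 * Real.pi * I * z) := by
  rw [mul_add, exp_add, mul_comm _ (n : ℂ), exp_nat_mul_two_pi_mul_I, mul_one]

theorem formal_monodromy_accumulation_general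
    (rD : ℝ) (χ0 χ1 : ℂ → ℂ → ℂ) (dχ0 : ℂ → ℂ) (lam0 : ℂ) (hlam0 : lam0 ≠ 0)
    (hd : ∀ h ∈ ball (0 : ℂ) rD, HasDerivAt (fun e => χ0 h e) (dχ0 h) 0)
    (hc : ∀ h ∈ ball (0 : ℂ) rD, ContinuousAt (fun e => χ1 h e) 0)
    (h0 : ∀ h ∈ ball (0 : ℂ) rD, χ0 h 0 = lam0)
    (ε₀ : ℂ)
    (κ : ℂ) (hκ : κ = exp (2 * Real.pi * I * lam0 / ε₀))
    (εseq : ℕ → ℂ) (hεseq : ∀ n : ℕ, εseq n = lam0 / (lam0 / ε₀ + n)) :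
    ∀ h ∈ ball (0 : ℂ) rD,
      (∀ n : ℕ, lam0 / ε₀ + n ≠ 0 →
        exp (2 * Real.pi * I * lam0 / εseq n) = κ ∧
        exp (-(2 * Real.pi * I * lam0 / εseq n)) = κ⁻¹) ∧
      Tendsto (fun n : ℕ => exp (-(2 * Real.pi * I * χ0 h (εseq n) / εseq n)))
        atTop (nhds (κ⁻¹ * exp (-(2 * Real.pi * I * dχ0 h)))) ∧
      Tendsto (fun n : ℕ =>
          exp (2 * Real.pi * I * (χ0 h (εseq n) / εseq n + χ1 h (εseq n))))
        atTop (nhds (κ * exp (2 * Real.pi * I * (dχ0 h + χ1 h 0)))) := by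
  intro h hD
  have hε : Tendsto εseq atTop (𝓝[≠] 0) := by
    simpa only [← hεseq] using tendsto_div_const_add_natCast_nhdsNE_zero hlam0 (lam0 / ε₀)
  have hκn : ∀ n, exp (2 * Real.pi * I * lam0 / εseq n) = κ := fun n => by
    rw [hκ, mul_div_assoc, mul_div_assoc, hεseq, div_div_cancel₀ hlam0,
      exp_two_pi_mul_I_mul_add_natCast]
  have hslope : Tendsto (fun n => 2 * Real.pi * I * χ0 h (εseq n) / εseq n
      - 2 * Real.pi * I * lam0 / εseq n) atTop (𝓝 (2 * Real.pi * I * dχ0 h)) := by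
    refine (((hd h hD).tendsto_div_sub_div_nhdsNE_zero.comp hε).const_mul _).congr fun n => ?_
    simp only [Function.comp_apply, h0 h hD]
    ring
  have hχ1 : Tendsto (fun n => χ1 h (εseq n)) atTop (𝓝 (χ1 h 0)) :=
    (hc h hD).tendsto.comp (tendsto_nhds_of_tendsto_nhdsWithin hε)
  refine ⟨fun n _ => ⟨hκn n, by rw [exp_neg, hκn]⟩, ?_, ?_⟩
  · refine (hslope.neg.cexp.const_mul κ⁻¹).congr fun n => ?_
    rw [← hκn n, ← exp_neg, ← exp_add]
    ring_nf
  · rw [mul_add]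
    refine ((hslope.add (hχ1.const_mul _)).cexp.const_mul κ).congr fun n => ?_
    rw [← hκn n, ← exp_add]
    ring_nf

/-- **Accumulation of the formal monodromy: the analytic core.**
Assume `χ⁰(h,0) ≡ lam0 ≠ 0`, `ε ↦ χ⁰(h,ε)` is differentiable at `0` and `ε ↦ χ¹(h,ε)`
continuous at `0`, for `h` in a disc `D`.  Along the sequence `ε_n = lam0/(lam0/ε₀ + n)`
the factor `e^{±2πilam0/ε_n}` stays equal to `κ^{±1} = e^{±2πilam0/ε₀}`, and the formal
monodromy multipliers converge:
`e^{−2πiχ⁰(h,ε_n)/ε_n} → κ⁻¹e^{−2πi∂_εχ⁰(h,0)}` and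
`e^{2πi[χ⁰(h,ε_n)/ε_n + χ¹(h,ε_n)]} → κ·e^{2πi[∂_εχ⁰(h,0) + χ¹(h,0)]}`. -/
theorem formal_monodromy_accumulation
    (rD rE : ℝ) (χ0 χ1 : ℂ → ℂ → ℂ) (dχ0 : ℂ → ℂ) (lam0 : ℂ) (hlam0 : lam0 ≠ 0)
    (hd : ∀ h ∈ ball (0 : ℂ) rD, HasDerivAt (fun e => χ0 h e) (dχ0 h) 0)
    (hc : ∀ h ∈ ball (0 : ℂ) rD, ContinuousAt (fun e => χ1 h e) 0)
    (h0 : ∀ h ∈ ball (0 : ℂ) rD, χ0 h 0 = lam0)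
    (ε₀ : ℂ) (hε₀E : ε₀ ∈ ball (0 : ℂ) rE) (hε₀ : ε₀ ≠ 0)
    (κ : ℂ) (hκ : κ = exp (2 * Real.pi * I * lam0 / ε₀))
    (εseq : ℕ → ℂ) (hεseq : ∀ n : ℕ, εseq n = lam0 / (lam0 / ε₀ + n)) :
    ∀ h ∈ ball (0 : ℂ) rD,
      (∀ n : ℕ, lam0 / ε₀ + n ≠ 0 →
        exp (2 * Real.pi * I * lam0 / εseq n) = κ ∧
        exp (-(2 * Real.pi * I * lam0 / εseq n)) = κ⁻¹) ∧
      Tendsto (fun n : ℕ => exp (-(2 * Real.pi * I * χ0 h (εseq n) / εseq n)))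
        atTop (nhds (κ⁻¹ * exp (-(2 * Real.pi * I * dχ0 h)))) ∧
      Tendsto (fun n : ℕ =>
          exp (2 * Real.pi * I * (χ0 h (εseq n) / εseq n + χ1 h (εseq n))))
        atTop (nhds (κ * exp (2 * Real.pi * I * (dχ0 h + χ1 h 0)))) :=
  formal_monodromy_accumulation_general rD χ0 χ1 dχ0 lam0 hlam0 hd hc h0 ε₀ κ hκ εseq hεseq
end

section
/- Define H_VI(q,p,t; ϑ₀,ϑ_t,ϑ₁,ϑ∞) = (1/(t(t−1)))·[ q(q−1)(q−t)p² − (ϑ₀(q−1)(q−t) + ϑ₁·q(q−t) + (ϑ_t−1)·q(q−1))·p + (((ϑ₀+ϑ₁+ϑ_t−1)² − ϑ∞²)/4)·(q−t) ] and H_{VI,ε}(q,p,t̃; ϑ₀,ϑ̃₁,ϑ∞) = (1/(t̃(1+εt̃)))·[ q(q−1)(q−1−εt̃)p² − (ϑ₀(q−1)(q−1−εt̃) + ϑ̃₁·q(q−1−εt̃) + t̃q − εt̃q)·p + (((ϑ₀+ϑ̃₁)² − ϑ∞²)/4)·(q−1−εt̃) ]. Then for all q, p, t̃, ε, ϑ₀,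 ϑ̃₁, ϑ∞ ∈ ℂ with ε ≠ 0, t̃ ≠ 0 and 1+εt̃ ≠ 0: ε·H_VI(q, p, 1+εt̃; ϑ₀, 1/ε, −1/ε+ϑ̃₁+1, ϑ∞) = H_{VI,ε}(q, p, t̃; ϑ₀, ϑ̃₁, ϑ∞). -/
/-- Okamoto's polynomial Hamiltonian of the sixth Painlevé equation. -/
noncomputable def HVI (th0 tht th1 thinf : ℂ) (q p t : ℂ) : ℂ :=
  (1 / (t * (t - 1))) *
    (q * (q - 1) * (q - t) * p ^ 2 -
      (th0 * (q - 1) * (q - t) + th1 * q * (q - t) + (tht - 1) * q * (q - 1)) * p +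
      (((th0 + th1 + tht - 1) ^ 2 - thinf ^ 2) / 4) * (q - t))

/-- The confluent family of Painlevé VI Hamiltonians. -/
noncomputable def HVIe (th0 th1t thinf : ℂ) (q p tt ε : ℂ) : ℂ :=
  (1 / (tt * (1 + ε * tt))) *
    (q * (q - 1) * (q - 1 - ε * tt) * p ^ 2 -
      (th0 * (q - 1) * (q - 1 - ε * tt) + th1t * q * (q - 1 - ε * tt) +
        tt * q - ε * tt * q) * p +
      (((th0 + th1t) ^ 2 - thinf ^ 2) / 4) * (q - 1 - ε * tt))

section Confluence

variable {ε tt : ℂ}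

/-- This holds also where `t̃ (1 + εt̃) = 0`, both sides then being the junk value `0`. -/
lemma mul_one_div_confluent_denominator (hε : ε ≠ 0) :
    ε * (1 / ((1 + ε * tt) * (1 + ε * tt - 1))) = 1 / (tt * (1 + ε * tt)) := by
  rw [add_sub_cancel_left, mul_one_div, mul_comm, mul_assoc, div_mul_cancel_left₀ hε, one_div]

/-- The divergent parts `∓1/ε` of `ϑ₁` and `ϑ_t` cancel up to `(1/ε)(t - 1) q = t̃ q`. -/
lemma confluent_momentum_coeff (hε : ε ≠ 0) (q th0 th1t : ℂ) :
    th0 * (q - 1) * (q - (1 + ε * tt)) + (-(1 / ε) + th1t + 1) * q * (q - (1 + ε * tt)) +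
        (1 / ε - 1) * q * (q - 1) =
      th0 * (q - 1) * (q - 1 - ε * tt) + th1t * q * (q - 1 - ε * tt) + tt * q - ε * tt * q := by
  field_simp
  ring

end Confluence

theorem HVI_confluence_substitution_general
    (q p tt ε th0 th1t thinf : ℂ)
    (hε : ε ≠ 0) :
    ε * HVI th0 (1 / ε) (-(1 / ε) + th1t + 1) thinf q p (1 + ε * tt) =
      HVIe th0 th1t thinf q p tt ε := by
  unfold HVI HVIe
  rw [← mul_assoc, mul_one_div_confluent_denominator hε, confluent_momentum_coeff hε]
  ring

/-- **Confluence substitution in the Painlevé VI Hamiltonian.**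
Under `t = 1 + εt̃`, `ϑ_t = 1/ε`, `ϑ₁ = −1/ε + ϑ̃₁ + 1`, the rescaled sixth Painlevé
Hamiltonian `ε·H_VI` equals the confluent family `H_{VI,ε}`. -/
theorem HVI_confluence_substitution
    (q p tt ε th0 th1t thinf : ℂ)
    (hε : ε ≠ 0) (htt : tt ≠ 0) (ht : 1 + ε * tt ≠ 0) :
    ε * HVI th0 (1 / ε) (-(1 / ε) + th1t + 1) thinf q p (1 + ε * tt) =
      HVIe th0 th1t thinf q p tt ε :=
  HVI_confluence_substitution_general q p tt ε th0 th1t thinf hε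
end

section
/- Let φ = (φ₁,φ₂), where φ₁, φ₂ ∈ ℂ[[u₁,u₂]] are formal power series whose coefficients vanish in all total degrees ≤ 1, and let r = (r₁,r₂), where r₁, r₂ ∈ ℂ[[w₁,w₂]] are formal power series whose coefficients vanish in all total degrees ≤ 1 and which are convergent, i.e., there exist C > 0 and ρ > 0 such that |coeff_m(r_j)| ≤ C·ρ^{|m|} for all multi-indices m and j = 1,2. Denote by φ̄_j and r̄_j the majorant series whose coefficient at each multi-index m is |coeff_m(φ_j)| resp. |coeff_m(r_j)|. Assume that for j = 1,2 and every multi-index m, |coeff_m(φ_j)| ≤ coeff_m( r̄_j(u₁ + φ̄₁(u), u₂ + φ̄₂(u)) ), where the substitution of the series (u₁+φ̄₁, u₂+φ̄₂) (which have zero constant terms) into r̄_j is the usual composition of formal power series. Then φ₁ and φ₂ are convergent: there exist C′ > 0 and ρ′ > 0 such that |coeff_m(φ_j)| ≤ C′·ρ′^{|m|} for all m and j = 1,2. -/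
/-- The multi-index `(a, b)` as an element of `Fin 2 →₀ ℕ`. -/
noncomputable def idx (a b : ℕ) : Fin 2 →₀ ℕ :=
  Finsupp.single 0 a + Finsupp.single 1 b

/-- The majorant series of a complex formal power series in two variables: the series
whose coefficient at each multi-index is the absolute value of the original one. -/
noncomputable def majorant (f : MvPowerSeries (Fin 2) ℂ) : MvPowerSeries (Fin 2) ℝ :=
  fun m => ‖MvPowerSeries.coeff m f‖

/-- Composition (substitution) `r(w₁, w₂)` of a formal power series `r` in two variables
with a pair of formal power series `w₁, w₂`.  When `w₁, w₂` have zero constant term,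
the coefficient of the composition at a multi-index `m` only involves the monomials
`w₁^{k₁}w₂^{k₂}` with `k₁ + k₂ ≤ |m|`, so the following finite sum is the usual
composition of formal power series. -/
noncomputable def substPair (r : MvPowerSeries (Fin 2) ℝ)
    (w₁ w₂ : MvPowerSeries (Fin 2) ℝ) : MvPowerSeries (Fin 2) ℝ :=
  fun m =>
    ∑ k ∈ Finset.range (m 0 + m 1 + 1) ×ˢ Finset.range (m 0 + m 1 + 1),
      MvPowerSeries.coeff (idx k.1 k.2) r *
        MvPowerSeries.coeff m (w₁ ^ k.1 * w₂ ^ k.2)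

/-!
Substituting `t` for both variables sends `φ̄_j` to a one-variable series whose `n`-th
coefficient is the sum of the coefficients of `φ̄_j` of total degree `n`.  For
`G = t + φ̄₁(t,t) + φ̄₂(t,t)` the hypotheses then give `G_n ≤ ∑_{2 ≤ k ≤ n} D A^k [t^n] G^k`
for `n ≥ 2`, the pairs `(k₁, k₂)` with `k₁ + k₂ = k` costing a factor `k + 1 ≤ 2^k`.  Since
`G` has no constant term, `[t^n] G^k` with `k ≥ 2` only involves the `G_i` with `i < n`, so by
strong induction `G` is dominated by every nonnegative series `Q` satisfying the reverse
inequality.  For `B` large the rescaled Catalan series `Q = t·c(Bt)`, which solves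
`Q = t + B Q²`, is such a series: `B^(k-1) [t^n] Q^k ≤ Q_n` turns the right-hand side into a
geometric series in `A / B`.  Finally `Q_n = B^(n-1) Cat(n-1) ≤ (4B)^n`.
-/

namespace PowerSeries

theorem coeff_pow_eq_zero_of_lt {R : Type*} [CommSemiring R] {f : PowerSeries R}
    (hf : constantCoeff f = 0) {n k : ℕ} (h : n < k) : coeff n (f ^ k) = 0 := by
  obtain ⟨g, rfl⟩ := X_dvd_iff.2 hf
  rw [mul_pow, coeff_X_pow_mul', if_neg (by omega)]

section Nonneg

variable {R : Type*} [CommSemiring R] [PartialOrder R] [IsOrderedRing R] {f g F G : PowerSeries R}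

theorem coeff_mul_nonneg (hf : ∀ n, 0 ≤ coeff n f) (hg : ∀ n, 0 ≤ coeff n g) (n : ℕ) :
    0 ≤ coeff n (f * g) := by
  rw [coeff_mul]
  exact Finset.sum_nonneg fun p _ => mul_nonneg (hf p.1) (hg p.2)

theorem coeff_pow_nonneg (hf : ∀ n, 0 ≤ coeff n f) (k n : ℕ) : 0 ≤ coeff n (f ^ k) := by
  induction k generalizing n with
  | zero => rw [pow_zero, coeff_one]; split_ifs <;> simp
  | succ k ih => rw [pow_succ]; exact coeff_mul_nonneg ih hf n

theorem coeff_mul_le_coeff_mul (hf : ∀ n, 0 ≤ coeff n f) (hg : ∀ n, 0 ≤ coeff n g)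
    (hfF : ∀ n, coeff n f ≤ coeff n F) (hgG : ∀ n, coeff n g ≤ coeff n G) (n : ℕ) :
    coeff n (f * g) ≤ coeff n (F * G) := by
  rw [coeff_mul, coeff_mul]
  exact Finset.sum_le_sum fun p _ =>
    mul_le_mul (hfF p.1) (hgG p.2) (hg p.2) ((hf p.1).trans (hfF p.1))

theorem coeff_pow_le_coeff_pow (hf : ∀ n, 0 ≤ coeff n f) (hfF : ∀ n, coeff n f ≤ coeff n F)
    (k n : ℕ) : coeff n (f ^ k) ≤ coeff n (F ^ k) := by
  induction k generalizing n with
  | zero => rfl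
  | succ k ih =>
    rw [pow_succ, pow_succ]
    exact coeff_mul_le_coeff_mul (coeff_pow_nonneg hf k) hf ih hfF n

theorem coeff_pow_le_coeff_pow_of_lt {N : ℕ} (hf : ∀ n, 0 ≤ coeff n f)
    (hfF : ∀ n < N, coeff n f ≤ coeff n F) (k : ℕ) {n : ℕ} (hn : n < N) :
    coeff n (f ^ k) ≤ coeff n (F ^ k) := by
  induction k generalizing n with
  | zero => rfl
  | succ k ih =>
    rw [pow_succ, pow_succ, coeff_mul, coeff_mul]
    refine Finset.sum_le_sum fun p hp => ?_
    have hp : p.1 + p.2 = n := Finset.HasAntidiagonal.mem_antidiagonal.1 hp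
    exact mul_le_mul (ih (by omega)) (hfF p.2 (by omega)) (hf p.2)
      ((coeff_pow_nonneg hf k p.1).trans (ih (by omega)))

theorem coeff_pow_le_coeff_pow_of_two_le {N : ℕ} (hf : ∀ n, 0 ≤ coeff n f)
    (hF : ∀ n, 0 ≤ coeff n F) (hf0 : constantCoeff f = 0)
    (hfF : ∀ n < N, coeff n f ≤ coeff n F) {k : ℕ} (hk : 2 ≤ k) :
    coeff N (f ^ k) ≤ coeff N (F ^ k) := by
  obtain ⟨k, rfl⟩ := Nat.exists_eq_add_of_le' hk
  rw [pow_succ f (k + 1), pow_succ F (k + 1), coeff_mul, coeff_mul]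
  refine Finset.sum_le_sum fun p hp => ?_
  have hp : p.1 + p.2 = N := Finset.HasAntidiagonal.mem_antidiagonal.1 hp
  have hRHS := mul_nonneg (coeff_pow_nonneg hF (k + 1) p.1) (hF p.2)
  rcases Nat.eq_zero_or_pos p.1 with h1 | h1
  · rw [coeff_pow_eq_zero_of_lt hf0 (by omega : p.1 < k + 1), zero_mul]
    exact hRHS
  rcases Nat.eq_zero_or_pos p.2 with h2 | h2
  · rw [show coeff p.2 f = 0 by rw [h2, coeff_zero_eq_constantCoeff_apply, hf0], mul_zero]
    exact hRHS
  exact mul_le_mul (coeff_pow_le_coeff_pow_of_lt hf hfF _ (by omega)) (hfF p.2 (by omega))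
    (hf p.2) (coeff_pow_nonneg hF _ _)

end Nonneg

section Catalan

variable {R : Type*} [CommRing R]

noncomputable def catalanMajorant (B : R) : PowerSeries R :=
  X * rescale B (map (Nat.castRingHom R) catalanSeries)

theorem X_add_C_mul_catalanMajorant_sq (B : R) :
    X + C B * catalanMajorant B ^ 2 = catalanMajorant B := by
  have h := congrArg (fun f => rescale B (map (Nat.castRingHom R) f))
    catalanSeries_sq_mul_X_add_one
  simp only [map_add, map_mul, map_pow, map_one, map_X, rescale_X] at h
  rw [catalanMajorant]
  linear_combination X * h

theorem coeff_succ_catalanMajorant (B : R) (n : ℕ) :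
    coeff (n + 1) (catalanMajorant B) = B ^ n * catalan n := by
  simp [catalanMajorant, coeff_succ_X_mul, coeff_rescale]

theorem constantCoeff_catalanMajorant (B : R) : constantCoeff (catalanMajorant B) = 0 := by
  simp [catalanMajorant]

end Catalan

variable {B : ℝ}

theorem coeff_catalanMajorant_nonneg (hB : 0 ≤ B) (n : ℕ) :
    0 ≤ coeff n (catalanMajorant B) := by
  cases n with
  | zero => rw [coeff_zero_eq_constantCoeff_apply, constantCoeff_catalanMajorant]
  | succ n => rw [coeff_succ_catalanMajorant]; positivity

theorem coeff_catalanMajorant_le (hB : 1 ≤ 4 * B) (n : ℕ) :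
    coeff n (catalanMajorant B) ≤ (4 * B) ^ n := by
  cases n with
  | zero => simp [constantCoeff_catalanMajorant]
  | succ n =>
    have hcat : (catalan n : ℝ) ≤ 4 ^ n := by
      exact_mod_cast ((Nat.le_mul_of_pos_left _ n.succ_pos).trans
        (succ_mul_catalan_eq_centralBinom n).le).trans (Nat.centralBinom_le_four_pow n)
    calc coeff (n + 1) (catalanMajorant B) = B ^ n * catalan n := coeff_succ_catalanMajorant B n
      _ ≤ B ^ n * 4 ^ n := mul_le_mul_of_nonneg_left hcat (pow_nonneg (by linarith) n)
      _ = (4 * B) ^ n := by ring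
      _ ≤ (4 * B) ^ (n + 1) := pow_le_pow_right₀ hB n.le_succ

theorem pow_mul_coeff_pow_catalanMajorant_le (hB : 0 ≤ B) (k n : ℕ) :
    B ^ k * coeff n (catalanMajorant B ^ (k + 1)) ≤ coeff n (catalanMajorant B) := by
  induction k with
  | zero => simp
  | succ k ih =>
    have hstep : B * coeff n (catalanMajorant B ^ (k + 2)) ≤
        coeff n (catalanMajorant B ^ (k + 1)) := by
      have h : C B * catalanMajorant B ^ (k + 2) =
          catalanMajorant B ^ (k + 1) - X * catalanMajorant B ^ k := by
        linear_combination catalanMajorant B ^ k * X_add_C_mul_catalanMajorant_sq B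
      have hX : 0 ≤ coeff n (X * catalanMajorant B ^ k) :=
        coeff_mul_nonneg (fun i => by rw [coeff_X]; split_ifs <;> norm_num)
          (coeff_pow_nonneg (coeff_catalanMajorant_nonneg hB) k) n
      rw [← coeff_C_mul, h, map_sub]
      linarith
    calc B ^ (k + 1) * coeff n (catalanMajorant B ^ (k + 2))
        = B ^ k * (B * coeff n (catalanMajorant B ^ (k + 2))) := by ring
      _ ≤ B ^ k * coeff n (catalanMajorant B ^ (k + 1)) := by gcongr
      _ ≤ _ := ih

theorem sum_coeff_pow_catalanMajorant_le {D A : ℝ} (hD : 0 ≤ D) (hA : 0 ≤ A) (hB : 0 < B)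
    (hAB : 2 * A ≤ B) (hDB : 2 * D * A ^ 2 ≤ B) (n : ℕ) :
    ∑ k ∈ Finset.Icc 2 n, D * A ^ k * coeff n (catalanMajorant B ^ k) ≤
      coeff n (catalanMajorant B) := by
  set c := coeff n (catalanMajorant B)
  set x := A / B
  have hx0 : 0 ≤ x := by positivity
  have hx : x ≤ 1 / 2 := by rw [div_le_iff₀ hB]; linarith
  have hterm : ∀ k ∈ Finset.Icc 2 n,
      D * A ^ k * coeff n (catalanMajorant B ^ k) ≤ D * B * c * x ^ k := by
    intro k hk
    obtain ⟨j, rfl⟩ : ∃ j, k = j + 1 := ⟨k - 1, by have := (Finset.mem_Icc.1 hk).1; omega⟩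
    have hAx : A ^ (j + 1) = B * x ^ (j + 1) * B ^ j := by
      simp only [x, div_pow]; field_simp; ring
    calc D * A ^ (j + 1) * coeff n (catalanMajorant B ^ (j + 1))
        = D * B * x ^ (j + 1) * (B ^ j * coeff n (catalanMajorant B ^ (j + 1))) := by
          rw [hAx]; ring
      _ ≤ D * B * x ^ (j + 1) * c := by
          gcongr; exact pow_mul_coeff_pow_catalanMajorant_le hB.le j n
      _ = D * B * c * x ^ (j + 1) := by ring
  have hgeom : ∑ k ∈ Finset.Icc 2 n, x ^ k ≤ 2 * x ^ 2 := by
    rw [← Finset.Ico_add_one_right_eq_Icc]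
    refine (geom_sum_Ico_le_of_lt_one hx0 (by linarith)).trans ?_
    rw [div_le_iff₀ (by linarith)]
    nlinarith
  have hc : 0 ≤ c := coeff_catalanMajorant_nonneg hB.le n
  calc ∑ k ∈ Finset.Icc 2 n, D * A ^ k * coeff n (catalanMajorant B ^ k)
      ≤ ∑ k ∈ Finset.Icc 2 n, D * B * c * x ^ k := Finset.sum_le_sum hterm
    _ = D * B * c * ∑ k ∈ Finset.Icc 2 n, x ^ k := by rw [Finset.mul_sum]
    _ ≤ D * B * c * (2 * x ^ 2) := by gcongr
    _ = 2 * D * A ^ 2 / B * c := by simp only [x]; field_simp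
    _ ≤ 1 * c := by gcongr; rwa [div_le_one hB]
    _ = c := one_mul c

theorem exists_coeff_le_pow_of_coeff_le_sum_coeff_pow {g : PowerSeries ℝ} {D A : ℝ}
    (hD : 0 ≤ D) (hA : 0 ≤ A) (hg : ∀ n, 0 ≤ coeff n g) (hg0 : constantCoeff g = 0)
    (hg1 : coeff 1 g ≤ 1)
    (hrec : ∀ n, 2 ≤ n → coeff n g ≤ ∑ k ∈ Finset.Icc 2 n, D * A ^ k * coeff n (g ^ k)) :
    ∃ K, 0 < K ∧ ∀ n, coeff n g ≤ K ^ n := by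
  obtain ⟨B, hB, hAB, hDB⟩ : ∃ B : ℝ, 1 ≤ B ∧ 2 * A ≤ B ∧ 2 * D * A ^ 2 ≤ B :=
    ⟨1 + 2 * A + 2 * D * A ^ 2, by
      refine ⟨?_, ?_, ?_⟩ <;> nlinarith [mul_nonneg hD (sq_nonneg A)]⟩
  have hle : ∀ n, coeff n g ≤ coeff n (catalanMajorant B) := by
    intro n
    induction n using Nat.strong_induction_on with
    | _ n ih =>
      match n with
      | 0 => simp [hg0, constantCoeff_catalanMajorant]
      | 1 => simpa [coeff_succ_catalanMajorant] using hg1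
      | n + 2 =>
        calc coeff (n + 2) g
            ≤ ∑ k ∈ Finset.Icc 2 (n + 2), D * A ^ k * coeff (n + 2) (g ^ k) :=
              hrec (n + 2) le_add_self
          _ ≤ ∑ k ∈ Finset.Icc 2 (n + 2),
                D * A ^ k * coeff (n + 2) (catalanMajorant B ^ k) := by
              refine Finset.sum_le_sum fun k hk => ?_
              gcongr
              exact coeff_pow_le_coeff_pow_of_two_le hg
                (coeff_catalanMajorant_nonneg (by linarith)) hg0 ih (Finset.mem_Icc.1 hk).1
          _ ≤ coeff (n + 2) (catalanMajorant B) :=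
              sum_coeff_pow_catalanMajorant_le hD hA (by linarith) hAB hDB _
  exact ⟨4 * B, by linarith, fun n => (hle n).trans (coeff_catalanMajorant_le (by linarith) n)⟩

end PowerSeries

theorem Finsupp.mapDomain_unit_eq_single_iff {σ : Type*} (m : σ →₀ ℕ) (n : ℕ) :
    mapDomain (fun _ => ()) m = single () n ↔ m.degree = n := by
  rw [unique_single (mapDomain _ m), (single_injective ()).eq_iff,
    ← degree_mapDomain (fun _ => ()) m, degree_eq_sum]
  simp

namespace MvPowerSeries

variable {σ R : Type*} [CommSemiring R]

/-- Sends every variable to `X` (recall that `PowerSeries R` is `MvPowerSeries Unit R`). -/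
noncomputable def collapse [Finite σ] : MvPowerSeries σ R →ₐ[R] PowerSeries R :=
  rename fun _ : σ => ()

theorem collapse_X [Finite σ] (i : σ) : collapse (X i : MvPowerSeries σ R) = PowerSeries.X :=
  rename_X (fun _ : σ => ()) i

variable [Fintype σ] [DecidableEq σ]

theorem coeff_collapse (p : MvPowerSeries σ R) (n : ℕ) :
    PowerSeries.coeff n (collapse p) =
      ∑ m ∈ Finset.finsuppAntidiag Finset.univ n, coeff m p := by
  rw [PowerSeries.coeff, collapse, coeff_rename]
  apply Finset.sum_congr _ fun _ _ => rfl
  ext m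
  simp [Finset.mem_finsuppAntidiag, ← Finsupp.degree_eq_sum, Finsupp.mapDomain_unit_eq_single_iff]

variable {p q : MvPowerSeries σ R}

theorem coeff_collapse_eq_zero {n : ℕ} (h : ∀ m : σ →₀ ℕ, m.degree = n → coeff m p = 0) :
    PowerSeries.coeff n (collapse p) = 0 := by
  rw [coeff_collapse]
  exact Finset.sum_eq_zero fun m hm =>
    h m (by simpa [Finset.mem_finsuppAntidiag, Finsupp.degree_eq_sum] using hm)

variable [PartialOrder R] [IsOrderedRing R]

theorem coeff_collapse_nonneg (hp : ∀ m, 0 ≤ coeff m p) (n : ℕ) :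
    0 ≤ PowerSeries.coeff n (collapse p) := by
  rw [coeff_collapse]
  exact Finset.sum_nonneg fun m _ => hp m

theorem coeff_le_coeff_collapse (hp : ∀ m, 0 ≤ coeff m p) (m : σ →₀ ℕ) :
    coeff m p ≤ PowerSeries.coeff m.degree (collapse p) := by
  rw [coeff_collapse]
  exact Finset.single_le_sum (fun m _ => hp m)
    (by simp [Finset.mem_finsuppAntidiag, Finsupp.degree_eq_sum])

theorem coeff_collapse_mono (h : ∀ m, coeff m p ≤ coeff m q) (n : ℕ) :
    PowerSeries.coeff n (collapse p) ≤ PowerSeries.coeff n (collapse q) := by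
  simp only [coeff_collapse]
  exact Finset.sum_le_sum fun m _ => h m

theorem coeff_collapse_pow_mul_pow_nonneg {w₁ w₂ : MvPowerSeries σ R}
    (hw₁ : ∀ m, 0 ≤ coeff m w₁) (hw₂ : ∀ m, 0 ≤ coeff m w₂) (k₁ k₂ n : ℕ) :
    0 ≤ PowerSeries.coeff n (collapse (w₁ ^ k₁ * w₂ ^ k₂)) := by
  rw [map_mul, map_pow, map_pow]
  exact PowerSeries.coeff_mul_nonneg
    (PowerSeries.coeff_pow_nonneg (coeff_collapse_nonneg hw₁) k₁)
    (PowerSeries.coeff_pow_nonneg (coeff_collapse_nonneg hw₂) k₂) n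

theorem coeff_collapse_pow_mul_pow_le {w₁ w₂ : MvPowerSeries σ R} {G : PowerSeries R}
    (hw₁ : ∀ m, 0 ≤ coeff m w₁) (hw₂ : ∀ m, 0 ≤ coeff m w₂)
    (hw₁G : ∀ n, PowerSeries.coeff n (collapse w₁) ≤ PowerSeries.coeff n G)
    (hw₂G : ∀ n, PowerSeries.coeff n (collapse w₂) ≤ PowerSeries.coeff n G) (k₁ k₂ n : ℕ) :
    PowerSeries.coeff n (collapse (w₁ ^ k₁ * w₂ ^ k₂)) ≤ PowerSeries.coeff n (G ^ (k₁ + k₂)) := by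
  rw [map_mul, map_pow, map_pow, pow_add]
  exact PowerSeries.coeff_mul_le_coeff_mul
    (PowerSeries.coeff_pow_nonneg (coeff_collapse_nonneg hw₁) k₁)
    (PowerSeries.coeff_pow_nonneg (coeff_collapse_nonneg hw₂) k₂)
    (PowerSeries.coeff_pow_le_coeff_pow (coeff_collapse_nonneg hw₁) hw₁G k₁)
    (PowerSeries.coeff_pow_le_coeff_pow (coeff_collapse_nonneg hw₂) hw₂G k₂) n

end MvPowerSeries

theorem Finset.sum_apply_fst_add_snd_le {R : Type*} [CommSemiring R] [PartialOrder R]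
    [IsOrderedRing R] {s : Finset (ℕ × ℕ)} {t : Finset ℕ} (hst : ∀ p ∈ s, p.1 + p.2 ∈ t)
    {F : ℕ → R} (hF : ∀ k ∈ t, 0 ≤ F k) :
    ∑ p ∈ s, F (p.1 + p.2) ≤ ∑ k ∈ t, ((k : R) + 1) * F k := by
  rw [← sum_fiberwise_of_maps_to hst]
  refine sum_le_sum fun k hk => ?_
  calc ∑ p ∈ s with p.1 + p.2 = k, F (p.1 + p.2)
      = ∑ p ∈ s with p.1 + p.2 = k, F k :=
        sum_congr rfl fun p hp => by rw [(mem_filter.1 hp).2]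
    _ ≤ ∑ p ∈ antidiagonal k, F k :=
        sum_le_sum_of_subset_of_nonneg
          (fun p hp => HasAntidiagonal.mem_antidiagonal.2 (mem_filter.1 hp).2)
          fun _ _ _ => hF k hk
    _ = ((k : R) + 1) * F k := by simp [Nat.card_antidiagonal]

section TwoVariables

open MvPowerSeries

theorem coeff_collapse_substPair (r w₁ w₂ : MvPowerSeries (Fin 2) ℝ) (n : ℕ) :
    PowerSeries.coeff n (collapse (substPair r w₁ w₂)) =
      ∑ k ∈ Finset.range (n + 1) ×ˢ Finset.range (n + 1),
        coeff (idx k.1 k.2) r * PowerSeries.coeff n (collapse (w₁ ^ k.1 * w₂ ^ k.2)) := by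
  simp only [coeff_collapse, Finset.mul_sum]
  rw [Finset.sum_comm]
  refine Finset.sum_congr rfl fun m hm => ?_
  have hm : m 0 + m 1 = n := by simpa [Finset.mem_finsuppAntidiag] using hm
  simp only [coeff_apply, substPair, hm]

open PowerSeries in
theorem coeff_collapse_substPair_le {r w₁ w₂ : MvPowerSeries (Fin 2) ℝ} {G : PowerSeries ℝ}
    {C ρ : ℝ} (hC : 0 ≤ C) (hρ : 0 ≤ ρ)
    (hr_low : ∀ m : Fin 2 →₀ ℕ, m 0 + m 1 ≤ 1 → MvPowerSeries.coeff m r = 0)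
    (hr : ∀ m : Fin 2 →₀ ℕ, MvPowerSeries.coeff m r ≤ C * ρ ^ (m 0 + m 1))
    (hw₁ : ∀ m, 0 ≤ MvPowerSeries.coeff m w₁) (hw₂ : ∀ m, 0 ≤ MvPowerSeries.coeff m w₂)
    (hG0 : PowerSeries.constantCoeff G = 0)
    (hw₁G : ∀ n, PowerSeries.coeff n (collapse w₁) ≤ PowerSeries.coeff n G)
    (hw₂G : ∀ n, PowerSeries.coeff n (collapse w₂) ≤ PowerSeries.coeff n G) (n : ℕ) :
    PowerSeries.coeff n (collapse (substPair r w₁ w₂)) ≤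
      ∑ k ∈ Finset.Icc 2 n, C * (2 * ρ) ^ k * PowerSeries.coeff n (G ^ k) := by
  have hG : ∀ n, 0 ≤ PowerSeries.coeff n G := fun n =>
    (coeff_collapse_nonneg hw₁ n).trans (hw₁G n)
  have hT := coeff_collapse_pow_mul_pow_nonneg hw₁ hw₂ (n := n)
  have hTG := coeff_collapse_pow_mul_pow_le hw₁ hw₂ hw₁G hw₂G (n := n)
  have hrp : ∀ p : ℕ × ℕ, MvPowerSeries.coeff (idx p.1 p.2) r ≤ C * ρ ^ (p.1 + p.2) := fun p => by
    simpa [idx] using hr (idx p.1 p.2)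
  have hvanish : ∀ p ∈ Finset.range (n + 1) ×ˢ Finset.range (n + 1),
      MvPowerSeries.coeff (idx p.1 p.2) r *
        PowerSeries.coeff n (collapse (w₁ ^ p.1 * w₂ ^ p.2)) ≠ 0 →
      p.1 + p.2 ∈ Finset.Icc 2 n := by
    intro p _ hp
    by_contra hk
    rcases not_and_or.1 (mt Finset.mem_Icc.2 hk) with hk | hk
    · exact hp (by rw [hr_low _ (by simp [idx]; omega), zero_mul])
    · have h0 : PowerSeries.coeff n (G ^ (p.1 + p.2)) = 0 :=
        coeff_pow_eq_zero_of_lt hG0 (by omega)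
      exact hp (by rw [le_antisymm ((hTG p.1 p.2).trans_eq h0) (hT p.1 p.2), mul_zero])
  rw [coeff_collapse_substPair, ← Finset.sum_filter_of_ne hvanish]
  calc ∑ p ∈ Finset.range (n + 1) ×ˢ Finset.range (n + 1) with p.1 + p.2 ∈ Finset.Icc 2 n,
        MvPowerSeries.coeff (idx p.1 p.2) r * PowerSeries.coeff n (collapse (w₁ ^ p.1 * w₂ ^ p.2))
      ≤ ∑ p ∈ Finset.range (n + 1) ×ˢ Finset.range (n + 1) with p.1 + p.2 ∈ Finset.Icc 2 n,
          C * ρ ^ (p.1 + p.2) * PowerSeries.coeff n (G ^ (p.1 + p.2)) :=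
        Finset.sum_le_sum fun p _ =>
          mul_le_mul (hrp p) (hTG p.1 p.2) (hT p.1 p.2) (by positivity)
    _ ≤ ∑ k ∈ Finset.Icc 2 n, ((k : ℝ) + 1) * (C * ρ ^ k * PowerSeries.coeff n (G ^ k)) :=
        Finset.sum_apply_fst_add_snd_le (F := fun k => C * ρ ^ k * PowerSeries.coeff n (G ^ k))
          (fun p hp => (Finset.mem_filter.1 hp).2)
          fun k _ => mul_nonneg (by positivity) (coeff_pow_nonneg hG k n)
    _ ≤ ∑ k ∈ Finset.Icc 2 n, C * (2 * ρ) ^ k * PowerSeries.coeff n (G ^ k) := by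
        refine Finset.sum_le_sum fun k _ => ?_
        have hk : (k : ℝ) + 1 ≤ 2 ^ k := by exact_mod_cast Nat.lt_two_pow_self
        have := mul_nonneg (by positivity : 0 ≤ C * ρ ^ k) (coeff_pow_nonneg hG k n)
        rw [mul_pow]
        nlinarith

theorem coeff_majorant (f : MvPowerSeries (Fin 2) ℂ) (m : Fin 2 →₀ ℕ) :
    coeff m (majorant f) = ‖coeff m f‖ := rfl

theorem coeff_majorant_nonneg (f : MvPowerSeries (Fin 2) ℂ) (m : Fin 2 →₀ ℕ) :
    0 ≤ coeff m (majorant f) := by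
  rw [coeff_majorant]; positivity

theorem coeff_X_add_majorant_nonneg (i : Fin 2) (f : MvPowerSeries (Fin 2) ℂ)
    (m : Fin 2 →₀ ℕ) : 0 ≤ coeff m (X i + majorant f) := by
  rw [map_add, coeff_X, coeff_majorant]
  split_ifs <;> positivity

theorem coeff_collapse_majorant_eq_zero {f : MvPowerSeries (Fin 2) ℂ}
    (hf : ∀ m : Fin 2 →₀ ℕ, m 0 + m 1 ≤ 1 → coeff m f = 0) {n : ℕ} (hn : n ≤ 1) :
    PowerSeries.coeff n (collapse (majorant f)) = 0 :=
  coeff_collapse_eq_zero fun m hm => by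
    rw [coeff_majorant, hf m (by simpa [Finsupp.degree_eq_sum] using hm.trans_le hn), norm_zero]

section CollapsedMajorant

variable (φ : Fin 2 → MvPowerSeries (Fin 2) ℂ)

noncomputable def collapsedMajorant : PowerSeries ℝ :=
  PowerSeries.X + collapse (majorant (φ 0)) + collapse (majorant (φ 1))

theorem coeff_collapse_X_add_majorant_le (j : Fin 2) (n : ℕ) :
    PowerSeries.coeff n (collapse (X j + majorant (φ j))) ≤
      PowerSeries.coeff n (collapsedMajorant φ) := by
  have h₀ := coeff_collapse_nonneg (coeff_majorant_nonneg (φ 0)) n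
  have h₁ := coeff_collapse_nonneg (coeff_majorant_nonneg (φ 1)) n
  fin_cases j <;> simp [collapsedMajorant, collapse_X] <;> linarith

theorem coeff_collapse_majorant_le (j : Fin 2) (n : ℕ) :
    PowerSeries.coeff n (collapse (majorant (φ j))) ≤
      PowerSeries.coeff n (collapsedMajorant φ) := by
  have h₀ := coeff_collapse_nonneg (coeff_majorant_nonneg (φ 0)) n
  have h₁ := coeff_collapse_nonneg (coeff_majorant_nonneg (φ 1)) n
  have hX : 0 ≤ PowerSeries.coeff n (PowerSeries.X : PowerSeries ℝ) := by
    rw [PowerSeries.coeff_X]; split_ifs <;> norm_num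
  fin_cases j <;> simp [collapsedMajorant] <;> linarith

theorem coeff_collapsedMajorant_nonneg (n : ℕ) :
    0 ≤ PowerSeries.coeff n (collapsedMajorant φ) :=
  (coeff_collapse_nonneg (coeff_X_add_majorant_nonneg 0 _) n).trans
    (coeff_collapse_X_add_majorant_le φ 0 n)

theorem coeff_collapsedMajorant_of_two_le {n : ℕ} (hn : 2 ≤ n) :
    PowerSeries.coeff n (collapsedMajorant φ) =
      PowerSeries.coeff n (collapse (majorant (φ 0))) +
        PowerSeries.coeff n (collapse (majorant (φ 1))) := by
  simp [collapsedMajorant, PowerSeries.coeff_X, show n ≠ 1 by omega]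

variable {φ}

theorem constantCoeff_collapsedMajorant
    (hφ : ∀ (j : Fin 2) (m : Fin 2 →₀ ℕ), m 0 + m 1 ≤ 1 → coeff m (φ j) = 0) :
    PowerSeries.constantCoeff (collapsedMajorant φ) = 0 := by
  rw [← PowerSeries.coeff_zero_eq_constantCoeff_apply]
  simp only [collapsedMajorant, map_add, PowerSeries.coeff_zero_X,
    coeff_collapse_majorant_eq_zero (hφ _) zero_le_one, add_zero]

theorem coeff_one_collapsedMajorant
    (hφ : ∀ (j : Fin 2) (m : Fin 2 →₀ ℕ), m 0 + m 1 ≤ 1 → coeff m (φ j) = 0) :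
    PowerSeries.coeff 1 (collapsedMajorant φ) = 1 := by
  simp only [collapsedMajorant, map_add, PowerSeries.coeff_one_X,
    coeff_collapse_majorant_eq_zero (hφ _) le_rfl, add_zero]

end CollapsedMajorant

end TwoVariables

/-- **Siegel's majorant-series lemma.**
Let `φ = (φ₁,φ₂)` be formal power series in `u = (u₁,u₂)` with no terms of total degree
`≤ 1`, and let `r = (r₁,r₂)` be convergent power series with no terms of total degree
`≤ 1`.  If, coefficientwise, `φ̄_j ≺ r̄_j(u₁ + φ̄₁(u), u₂ + φ̄₂(u))` for `j = 1,2` (bars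
denoting majorant series), then `φ₁, φ₂` are convergent. -/
theorem siegel_majorant_lemma
    (φ r : Fin 2 → MvPowerSeries (Fin 2) ℂ)
    (hφlow : ∀ (j : Fin 2) (m : Fin 2 →₀ ℕ), m 0 + m 1 ≤ 1 →
      MvPowerSeries.coeff m (φ j) = 0)
    (hrlow : ∀ (j : Fin 2) (m : Fin 2 →₀ ℕ), m 0 + m 1 ≤ 1 →
      MvPowerSeries.coeff m (r j) = 0)
    (hrconv : ∃ C ρ : ℝ, 0 < C ∧ 0 < ρ ∧ ∀ (j : Fin 2) (m : Fin 2 →₀ ℕ),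
      ‖MvPowerSeries.coeff m (r j)‖ ≤ C * ρ ^ (m 0 + m 1))
    (hmaj : ∀ (j : Fin 2) (m : Fin 2 →₀ ℕ),
      ‖MvPowerSeries.coeff m (φ j)‖ ≤
        MvPowerSeries.coeff m
          (substPair (majorant (r j))
            (MvPowerSeries.X 0 + majorant (φ 0))
            (MvPowerSeries.X 1 + majorant (φ 1)))) :
    ∃ C' ρ' : ℝ, 0 < C' ∧ 0 < ρ' ∧ ∀ (j : Fin 2) (m : Fin 2 →₀ ℕ),
      ‖MvPowerSeries.coeff m (φ j)‖ ≤ C' * ρ' ^ (m 0 + m 1) := by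
  obtain ⟨C, ρ, hC, hρ, hr⟩ := hrconv
  have hrec : ∀ j n, PowerSeries.coeff n (MvPowerSeries.collapse (majorant (φ j))) ≤
      ∑ k ∈ Finset.Icc 2 n, C * (2 * ρ) ^ k * PowerSeries.coeff n (collapsedMajorant φ ^ k) :=
    fun j n => (MvPowerSeries.coeff_collapse_mono (hmaj j) n).trans <|
      coeff_collapse_substPair_le (r := majorant (r j)) hC.le hρ.le
        (fun m hm => by rw [coeff_majorant, hrlow j m hm, norm_zero]) (hr j)
        (coeff_X_add_majorant_nonneg 0 _) (coeff_X_add_majorant_nonneg 1 _)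
        (constantCoeff_collapsedMajorant hφlow) (coeff_collapse_X_add_majorant_le φ 0)
        (coeff_collapse_X_add_majorant_le φ 1) n
  obtain ⟨K, hK, hK_bound⟩ := PowerSeries.exists_coeff_le_pow_of_coeff_le_sum_coeff_pow
    (D := 2 * C) (A := 2 * ρ) (by positivity) (by positivity) (coeff_collapsedMajorant_nonneg φ)
    (constantCoeff_collapsedMajorant hφlow) (coeff_one_collapsedMajorant hφlow).le fun n hn => by
      rw [coeff_collapsedMajorant_of_two_le φ hn]
      refine (add_le_add (hrec 0 n) (hrec 1 n)).trans_eq ?_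
      rw [← Finset.sum_add_distrib]
      exact Finset.sum_congr rfl fun _ _ => by ring
  refine ⟨1, K, one_pos, hK, fun j m => ?_⟩
  calc ‖MvPowerSeries.coeff m (φ j)‖
      ≤ PowerSeries.coeff m.degree (MvPowerSeries.collapse (majorant (φ j))) :=
        MvPowerSeries.coeff_le_coeff_collapse (coeff_majorant_nonneg _) m
    _ ≤ PowerSeries.coeff m.degree (collapsedMajorant φ) :=
        coeff_collapse_majorant_le φ j _
    _ ≤ K ^ m.degree := hK_bound _
    _ = 1 * K ^ (m 0 + m 1) := by simp [Finsupp.degree_eq_sum]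
end
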